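/- arXiv:2008.09947 — 5 statements merged into one kernel-verified Lean document; each statement's English description precedes it below -/
import Mathlib

section
/- Let p > 2 and let f : [0,1] → [0,1] be a homeomorphism (increasing, continuous, bijective) with f(0) = 0. If f satisfies the p-Douglas condition on [0,1], i.e. ∫₀¹∫₀¹ |f(x)-f(y)|^p / |x-y|^p dx dy < ∞, then ∫₀¹ |f(x)|^p / x^{p-1} dx < ∞. -/
/-!
Cut `(0, 1]` into the dyadic intervals `Iₙ = (2⁻ⁿ⁻¹, 2⁻ⁿ]`. As `f` is increasing, the integral of
`|f x|ᵖ / xᵖ⁻¹` over `Iₙ` is at most `2ᵖ⁻² · 2⁽ᵖ⁻²⁾ⁿ f(2⁻ⁿ)ᵖ`. Since `f` is continuous with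
`f 0 = 0`, `f(2⁻ⁿ)` is the tail sum `∑_{j ≥ n} aⱼ` of the increments `aⱼ = f(2⁻ʲ) - f(2⁻ʲ⁻¹)`, and
because `p > 2` the weights `2⁽ᵖ⁻²⁾ⁿ` grow geometrically, so a discrete Hardy inequality bounds
`∑ₙ 2⁽ᵖ⁻²⁾ⁿ (∑_{j ≥ n} aⱼ)ᵖ` by a constant times `∑ₙ 2⁽ᵖ⁻²⁾ⁿ aₙᵖ`. Finally, for `x ∈ Iₙ` and
`0 ≤ y ≤ 2⁻ⁿ⁻²` we have `f x - f y ≥ aₙ₊₁` and `|x - y| ≤ 2⁻ⁿ`, so the Douglas energy of `Iₙ × [0, 1]`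
dominates `2⁽ᵖ⁻²⁾⁽ⁿ⁺¹⁾ aₙ₊₁ᵖ` up to a constant; the `Iₙ` being disjoint, these energies sum to at
most the full Douglas integral.
-/

open MeasureTheory Set Filter Topology ENNReal

namespace ENNReal

theorem tsum_two_rpow_neg_mul_ne_top {γ : ℝ} (hγ : 0 < γ) :
    ∑' n : ℕ, (2 : ℝ≥0∞) ^ (-(γ * n)) ≠ ∞ := by
  have hq : (2 : ℝ≥0∞) ^ (-γ) < 1 :=
    rpow_lt_one_of_one_lt_of_neg one_lt_two (neg_neg_of_pos hγ)
  have hgeom : ∀ n : ℕ, (2 : ℝ≥0∞) ^ (-(γ * n)) = (2 ^ (-γ)) ^ n := fun n => by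
    rw [← rpow_mul_natCast, neg_mul]
  simp_rw [hgeom, tsum_geometric]
  exact inv_ne_top.2 (tsub_pos_of_lt hq).ne'

theorem rpow_tsum_le_rpow_tsum_inv_mul_tsum_mul_rpow {ι : Type*} {p : ℝ} (hp : 0 < p)
    (a w : ι → ℝ≥0∞) (hw₀ : ∀ i, w i ≠ 0) (hw : ∀ i, w i ≠ ∞) :
    (∑' i, a i) ^ p ≤ (∑' i, (w i)⁻¹) ^ p * ∑' i, (w i * a i) ^ p := by
  set Q := ∑' i, (w i * a i) ^ p
  have hterm : ∀ i, a i ≤ (w i)⁻¹ * Q ^ p⁻¹ := fun i =>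
    calc a i = (w i)⁻¹ * (w i * a i) := by
          rw [← mul_assoc, ENNReal.inv_mul_cancel (hw₀ i) (hw i), one_mul]
      _ ≤ (w i)⁻¹ * Q ^ p⁻¹ := by
          gcongr
          exact (le_rpow_inv_iff hp).2 (ENNReal.le_tsum (f := fun i => (w i * a i) ^ p) i)
  calc (∑' i, a i) ^ p ≤ (∑' i, (w i)⁻¹ * Q ^ p⁻¹) ^ p := by gcongr; exact hterm _
    _ = (∑' i, (w i)⁻¹) ^ p * Q := by
      rw [ENNReal.tsum_mul_right, mul_rpow_of_nonneg _ _ hp.le, rpow_inv_rpow hp.ne']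

/-- A discrete Hardy inequality with geometric weights. -/
theorem exists_tsum_two_rpow_mul_rpow_tsum_tail_le {γ p : ℝ} (hγ : 0 < γ) (hp : 0 < p) :
    ∃ C : ℝ≥0∞, C ≠ ∞ ∧ ∀ a : ℕ → ℝ≥0∞,
      ∑' n : ℕ, 2 ^ (γ * n) * (∑' j, a (n + j)) ^ p ≤ C * ∑' n : ℕ, 2 ^ (γ * n) * a n ^ p := by
  set G := ∑' j : ℕ, (2 : ℝ≥0∞) ^ (-(γ / (2 * p) * j))
  set H := ∑' j : ℕ, (2 : ℝ≥0∞) ^ (-(γ / 2 * j))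
  refine ⟨G ^ p * H, mul_ne_top (rpow_ne_top_of_nonneg hp.le
    (tsum_two_rpow_neg_mul_ne_top (by positivity))) (tsum_two_rpow_neg_mul_ne_top (by positivity)),
    fun a => ?_⟩
  -- Weighting the `j`-th term by `2 ^ (γ j / (2 p))` spends half of the geometric gain `2 ^ (γ j)`
  -- on the tail bound; the other half makes the reindexed double sum converge.
  have htail : ∀ n,
      (∑' j, a (n + j)) ^ p ≤ G ^ p * ∑' j : ℕ, 2 ^ (γ / 2 * j) * a (n + j) ^ p := by
    intro n
    have hweight : ∀ j : ℕ, ((2 : ℝ≥0∞) ^ (γ / (2 * p) * j) * a (n + j)) ^ p =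
        2 ^ (γ / 2 * j) * a (n + j) ^ p := fun j => by
      rw [mul_rpow_of_nonneg _ _ hp.le, ← rpow_mul]
      congr 2
      field_simp
    simpa only [← rpow_neg, hweight] using rpow_tsum_le_rpow_tsum_inv_mul_tsum_mul_rpow hp
      (fun j => a (n + j)) (fun j : ℕ => (2 : ℝ≥0∞) ^ (γ / (2 * p) * j))
      (fun _ => by positivity) (fun _ => by finiteness)
  have hshift : ∀ j : ℕ, ∑' n : ℕ, 2 ^ (γ * ((n + j : ℕ) : ℝ)) * a (n + j) ^ p ≤
      ∑' n : ℕ, 2 ^ (γ * n) * a n ^ p :=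
    fun j => tsum_comp_le_tsum_of_injective (add_left_injective j) (fun n => 2 ^ (γ * n) * a n ^ p)
  calc ∑' n : ℕ, 2 ^ (γ * n) * (∑' j, a (n + j)) ^ p
      ≤ ∑' n : ℕ, 2 ^ (γ * n) * (G ^ p * ∑' j : ℕ, 2 ^ (γ / 2 * j) * a (n + j) ^ p) := by
        gcongr with n; exact htail n
    _ = G ^ p * ∑' j : ℕ, 2 ^ (-(γ / 2 * j)) *
          ∑' n : ℕ, 2 ^ (γ * ((n + j : ℕ) : ℝ)) * a (n + j) ^ p := by
        simp_rw [← ENNReal.tsum_mul_left]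
        rw [ENNReal.tsum_comm]
        refine tsum_congr fun j => tsum_congr fun n => ?_
        have hexp : (2 : ℝ≥0∞) ^ (γ * n) * 2 ^ (γ / 2 * j) =
            2 ^ (-(γ / 2 * j)) * 2 ^ (γ * ((n + j : ℕ) : ℝ)) := by
          rw [← rpow_add _ _ two_ne_zero ofNat_ne_top, ← rpow_add _ _ two_ne_zero ofNat_ne_top]
          push_cast
          ring_nf
        rw [← mul_assoc ((2 : ℝ≥0∞) ^ (-(γ / 2 * j))), ← hexp]
        ring
    _ ≤ G ^ p * ∑' j : ℕ, 2 ^ (-(γ / 2 * j)) * ∑' n : ℕ, 2 ^ (γ * n) * a n ^ p :=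
        mul_le_mul_right (ENNReal.tsum_le_tsum fun j => mul_le_mul_right (hshift j) _) _
    _ = G ^ p * H * ∑' n : ℕ, 2 ^ (γ * n) * a n ^ p := by
        rw [ENNReal.tsum_mul_right, mul_assoc]

theorem ofReal_two_inv_pow_rpow (n : ℕ) (q : ℝ) :
    ENNReal.ofReal (((2 : ℝ)⁻¹ ^ n) ^ q) = 2 ^ (-(q * n)) := by
  rw [← ofReal_rpow_of_pos (by positivity), ofReal_pow (by norm_num), ofReal_inv_of_pos two_pos,
    ofReal_ofNat, ← ENNReal.inv_pow, ← rpow_natCast, ← rpow_neg, ← rpow_mul]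
  ring_nf

theorem ofReal_two_inv_pow (n : ℕ) : ENNReal.ofReal ((2 : ℝ)⁻¹ ^ n) = 2 ^ (-(n : ℝ)) := by
  simpa using ofReal_two_inv_pow_rpow n 1

end ENNReal

theorem hasSum_sub_succ_of_antitone {u : ℕ → ℝ} {l : ℝ} (hu : Antitone u)
    (hl : Tendsto u atTop (𝓝 l)) : HasSum (fun n => u n - u (n + 1)) (u 0 - l) :=
  (hasSum_iff_tendsto_nat_of_nonneg (fun n => sub_nonneg.2 (hu n.le_succ)) _).2 <| by
    simp_rw [Finset.sum_range_sub']
    exact tendsto_const_nhds.sub hl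

theorem ENNReal.ofReal_eq_tsum_sub_succ_of_antitone {u : ℕ → ℝ} (hu : Antitone u)
    (hl : Tendsto u atTop (𝓝 0)) (n : ℕ) :
    ENNReal.ofReal (u n) = ∑' j, ENNReal.ofReal (u (n + j) - u (n + j + 1)) := by
  have hsum := hasSum_sub_succ_of_antitone (u := fun j => u (n + j)) (fun i j hij => hu (by omega))
    (by simpa only [add_comm n] using (tendsto_add_atTop_iff_nat n).2 hl)
  simp only [add_zero, sub_zero, ← add_assoc] at hsum
  rw [← hsum.tsum_eq, ENNReal.ofReal_tsum_of_nonneg (fun j => sub_nonneg.2 (hu (by omega)))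
    hsum.summable]

theorem two_inv_pow_mem_Icc (n : ℕ) : (2 : ℝ)⁻¹ ^ n ∈ Icc (0 : ℝ) 1 :=
  ⟨by positivity, pow_le_one₀ (by norm_num) (by norm_num)⟩

theorem antitone_two_inv_pow : Antitone fun n : ℕ => (2 : ℝ)⁻¹ ^ n :=
  fun _ _ h => pow_le_pow_of_le_one (by norm_num) (by norm_num) h

theorem iUnion_Ioc_two_inv_pow :
    ⋃ n : ℕ, Ioc ((2 : ℝ)⁻¹ ^ (n + 1)) (2⁻¹ ^ n) = Ioc 0 1 := by
  ext x
  simp only [mem_iUnion, mem_Ioc]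
  constructor
  · rintro ⟨n, hn, hn'⟩
    exact ⟨lt_of_le_of_lt (by positivity) hn, hn'.trans (two_inv_pow_mem_Icc n).2⟩
  · rintro ⟨hx₀, hx₁⟩
    exact exists_nat_pow_near_of_lt_one hx₀ hx₁ (by norm_num) (by norm_num)

theorem lintegral_Icc_zero_one_eq_tsum_lintegral_Ioc_two_inv_pow (g : ℝ → ℝ≥0∞) :
    ∫⁻ x in Icc 0 1, g x = ∑' n : ℕ, ∫⁻ x in Ioc ((2 : ℝ)⁻¹ ^ (n + 1)) (2⁻¹ ^ n), g x := by
  have hdisj :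
      Pairwise (Function.onFun Disjoint fun n : ℕ => Ioc ((2 : ℝ)⁻¹ ^ (n + 1)) (2⁻¹ ^ n)) :=
    antitone_two_inv_pow.pairwise_disjoint_on_Ioc_succ
  rw [← setLIntegral_congr Ioc_ae_eq_Icc, ← iUnion_Ioc_two_inv_pow,
    lintegral_iUnion (fun _ => measurableSet_Ioc) hdisj]

theorem volume_Ioc_two_inv_pow (n : ℕ) :
    volume (Ioc ((2 : ℝ)⁻¹ ^ (n + 1)) (2⁻¹ ^ n)) = ENNReal.ofReal (2⁻¹ ^ (n + 1)) := by
  rw [Real.volume_Ioc, pow_succ]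
  congr 1
  ring

section DyadicBounds

variable {f : ℝ → ℝ} {p : ℝ}

theorem lintegral_Ioc_two_inv_pow_rpow_div_rpow_le (hf : MonotoneOn f (Icc 0 1)) (hf₀ : 0 ≤ f 0)
    (hp : 1 ≤ p) (n : ℕ) :
    ∫⁻ x in Ioc ((2 : ℝ)⁻¹ ^ (n + 1)) (2⁻¹ ^ n), ENNReal.ofReal (|f x| ^ p / x ^ (p - 1)) ≤
      2 ^ (p - 2) * (2 ^ ((p - 2) * n) * ENNReal.ofReal (f (2⁻¹ ^ n)) ^ p) := by
  set t : ℕ → ℝ := fun n => (2 : ℝ)⁻¹ ^ n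
  have hft : 0 ≤ f (t n) :=
    hf₀.trans (hf ⟨le_rfl, zero_le_one⟩ (two_inv_pow_mem_Icc n) (by positivity))
  have hbound : ∀ x ∈ Ioc (t (n + 1)) (t n), ENNReal.ofReal (|f x| ^ p / x ^ (p - 1)) ≤
      ENNReal.ofReal (f (t n) ^ p / t (n + 1) ^ (p - 1)) := by
    intro x hx
    have hx₀ : 0 < x := lt_of_le_of_lt (by positivity) hx.1
    have hxI : x ∈ Icc (0 : ℝ) 1 := ⟨hx₀.le, hx.2.trans (two_inv_pow_mem_Icc n).2⟩
    have hfx : 0 ≤ f x := hf₀.trans (hf ⟨le_rfl, zero_le_one⟩ hxI hx₀.le)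
    have hfxn : f x ≤ f (t n) := hf hxI (two_inv_pow_mem_Icc n) hx.2
    rw [abs_of_nonneg hfx]
    gcongr
    exact hx.1.le
  have ht : 0 < t (n + 1) := by positivity
  calc ∫⁻ x in Ioc (t (n + 1)) (t n), ENNReal.ofReal (|f x| ^ p / x ^ (p - 1))
      ≤ ∫⁻ _ in Ioc (t (n + 1)) (t n), ENNReal.ofReal (f (t n) ^ p / t (n + 1) ^ (p - 1)) :=
        setLIntegral_mono measurable_const hbound
    _ = ENNReal.ofReal (f (t n) ^ p * t (n + 1) ^ (-(p - 2))) := by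
        rw [setLIntegral_const, volume_Ioc_two_inv_pow, ← ENNReal.ofReal_mul (by positivity),
          show -(p - 2) = 1 - (p - 1) by ring, Real.rpow_sub ht 1 (p - 1), Real.rpow_one]
        simp only [t]
        congr 1
        ring
    _ = 2 ^ (p - 2) * (2 ^ ((p - 2) * n) * ENNReal.ofReal (f (2⁻¹ ^ n)) ^ p) := by
        rw [ENNReal.ofReal_mul (by positivity), ofReal_rpow_of_nonneg hft (by linarith),
          ENNReal.ofReal_two_inv_pow_rpow, ← mul_assoc, ← rpow_add _ _ two_ne_zero ofNat_ne_top,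
          mul_comm]
        push_cast
        ring_nf

theorem two_rpow_mul_ofReal_sub_rpow_le_lintegral_Ioc_two_inv_pow (hf : MonotoneOn f (Icc 0 1))
    (hp : 0 ≤ p) (n : ℕ) :
    2 ^ ((p - 2) * ((n + 1 : ℕ) : ℝ)) *
        ENNReal.ofReal (f (2⁻¹ ^ (n + 1)) - f (2⁻¹ ^ (n + 1 + 1))) ^ p ≤
      2 ^ (p + 1) * ∫⁻ x in Ioc ((2 : ℝ)⁻¹ ^ (n + 1)) (2⁻¹ ^ n), ∫⁻ y in Icc (0 : ℝ) 1,
        ENNReal.ofReal (|f x - f y| ^ p / |x - y| ^ p) := by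
  set t : ℕ → ℝ := fun n => (2 : ℝ)⁻¹ ^ n
  set δ := f (t (n + 1)) - f (t (n + 2))
  have hδ : 0 ≤ δ := sub_nonneg.2 <|
    hf (two_inv_pow_mem_Icc _) (two_inv_pow_mem_Icc _) (antitone_two_inv_pow (by omega))
  have hkernel : ∀ x ∈ Ioc (t (n + 1)) (t n), ∀ y ∈ Icc 0 (t (n + 2)),
      ENNReal.ofReal (δ ^ p / t n ^ p) ≤ ENNReal.ofReal (|f x - f y| ^ p / |x - y| ^ p) := by
    intro x hx y hy
    have hxI : x ∈ Icc (0 : ℝ) 1 :=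
      ⟨(lt_of_le_of_lt (by positivity) hx.1).le, hx.2.trans (two_inv_pow_mem_Icc n).2⟩
    have hyI : y ∈ Icc (0 : ℝ) 1 := ⟨hy.1, hy.2.trans (two_inv_pow_mem_Icc _).2⟩
    have hfx : f (t (n + 1)) ≤ f x := hf (two_inv_pow_mem_Icc _) hxI hx.1.le
    have hfy : f y ≤ f (t (n + 2)) := hf hyI (two_inv_pow_mem_Icc _) hy.2
    have ht : t (n + 2) < t (n + 1) :=
      pow_lt_pow_right_of_lt_one₀ (by norm_num) (by norm_num) (by omega)
    have hxy : 0 < x - y := by linarith [hx.1, hy.2]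
    gcongr
    · exact (le_abs_self _).trans' (by linarith)
    · rw [abs_of_pos hxy]; linarith [hx.2, hy.1]
  have hlower : ENNReal.ofReal (δ ^ p / t n ^ p) * ENNReal.ofReal (t (n + 2)) *
      ENNReal.ofReal (t (n + 1)) ≤ ∫⁻ x in Ioc (t (n + 1)) (t n), ∫⁻ y in Icc (0 : ℝ) 1,
        ENNReal.ofReal (|f x - f y| ^ p / |x - y| ^ p) := by
    rw [← volume_Ioc_two_inv_pow n, ← setLIntegral_const]
    refine setLIntegral_mono' measurableSet_Ioc fun x hx => ?_
    calc ENNReal.ofReal (δ ^ p / t n ^ p) * ENNReal.ofReal (t (n + 2))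
        = ∫⁻ _ in Icc 0 (t (n + 2)), ENNReal.ofReal (δ ^ p / t n ^ p) := by
          rw [setLIntegral_const, Real.volume_Icc, sub_zero]
      _ ≤ ∫⁻ y in Icc 0 (t (n + 2)), ENNReal.ofReal (|f x - f y| ^ p / |x - y| ^ p) :=
          setLIntegral_mono' measurableSet_Icc (hkernel x hx)
      _ ≤ _ := lintegral_mono_set (Icc_subset_Icc le_rfl (two_inv_pow_mem_Icc _).2)
  calc 2 ^ ((p - 2) * ((n + 1 : ℕ) : ℝ)) * ENNReal.ofReal δ ^ p
      = 2 ^ (p + 1) * (ENNReal.ofReal (δ ^ p / t n ^ p) * ENNReal.ofReal (t (n + 2)) *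
          ENNReal.ofReal (t (n + 1))) := by
        rw [ENNReal.ofReal_div_of_pos (by positivity), ofReal_rpow_of_nonneg hδ hp,
          ENNReal.ofReal_two_inv_pow_rpow, ENNReal.ofReal_two_inv_pow, ENNReal.ofReal_two_inv_pow,
          div_eq_mul_inv, ← rpow_neg]
        have hexp : (2 : ℝ≥0∞) ^ (p + 1) * 2 ^ (- -(p * n)) * 2 ^ (-((n + 2 : ℕ) : ℝ)) *
            2 ^ (-((n + 1 : ℕ) : ℝ)) = 2 ^ ((p - 2) * ((n + 1 : ℕ) : ℝ)) := by
          simp only [← rpow_add _ _ two_ne_zero ofNat_ne_top]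
          push_cast
          ring_nf
        rw [← hexp]
        ring
    _ ≤ _ := by gcongr

end DyadicBounds

theorem douglas_implies_weighted_integrable_general
    (p : ℝ) (hp : 2 < p) (f : ℝ → ℝ)
    (hmono : StrictMonoOn f (Icc 0 1))
    (hcont : ContinuousOn f (Icc 0 1))
    (hf0 : f 0 = 0)
    (hDouglas : ∫⁻ x in Icc (0:ℝ) 1, ∫⁻ y in Icc (0:ℝ) 1,
        ENNReal.ofReal (|f x - f y| ^ p / |x - y| ^ p) < ⊤) :
    ∫⁻ x in Icc (0:ℝ) 1, ENNReal.ofReal (|f x| ^ p / x ^ (p - 1)) < ⊤ := by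
  set D := ∫⁻ x in Icc (0:ℝ) 1, ∫⁻ y in Icc (0:ℝ) 1,
    ENNReal.ofReal (|f x - f y| ^ p / |x - y| ^ p) with hD
  have hf := hmono.monotoneOn
  set a : ℕ → ℝ≥0∞ := fun n => ENNReal.ofReal (f (2⁻¹ ^ n) - f (2⁻¹ ^ (n + 1)))
  have htail : ∀ n, ENNReal.ofReal (f (2⁻¹ ^ n)) = ∑' j, a (n + j) := by
    refine ENNReal.ofReal_eq_tsum_sub_succ_of_antitone (fun m n hmn =>
      hf (two_inv_pow_mem_Icc n) (two_inv_pow_mem_Icc m) (antitone_two_inv_pow hmn)) ?_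
    rw [← hf0]
    exact (hcont 0 ⟨le_rfl, zero_le_one⟩).tendsto.comp (tendsto_nhdsWithin_iff.2
      ⟨tendsto_pow_atTop_nhds_zero_of_lt_one (by norm_num) (by norm_num),
        .of_forall two_inv_pow_mem_Icc⟩)
  have hscales :
      ∑' n : ℕ, 2 ^ ((p - 2) * ((n + 1 : ℕ) : ℝ)) * a (n + 1) ^ p ≤ 2 ^ (p + 1) * D := by
    rw [hD, lintegral_Icc_zero_one_eq_tsum_lintegral_Ioc_two_inv_pow, ← ENNReal.tsum_mul_left]
    exact ENNReal.tsum_le_tsum fun n =>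
      two_rpow_mul_ofReal_sub_rpow_le_lintegral_Ioc_two_inv_pow hf (by linarith) n
  obtain ⟨C, hC, hardy⟩ :=
    ENNReal.exists_tsum_two_rpow_mul_rpow_tsum_tail_le (p := p) (sub_pos.2 hp) (by linarith)
  calc ∫⁻ x in Icc (0:ℝ) 1, ENNReal.ofReal (|f x| ^ p / x ^ (p - 1))
      ≤ ∑' n : ℕ, 2 ^ (p - 2) * (2 ^ ((p - 2) * n) * ENNReal.ofReal (f (2⁻¹ ^ n)) ^ p) := by
        rw [lintegral_Icc_zero_one_eq_tsum_lintegral_Ioc_two_inv_pow]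
        exact ENNReal.tsum_le_tsum fun n =>
          lintegral_Ioc_two_inv_pow_rpow_div_rpow_le hf hf0.ge (by linarith) n
    _ = 2 ^ (p - 2) * ∑' n : ℕ, 2 ^ ((p - 2) * n) * (∑' j, a (n + j)) ^ p := by
        simp_rw [htail, ENNReal.tsum_mul_left]
    _ ≤ 2 ^ (p - 2) * (C * ∑' n : ℕ, 2 ^ ((p - 2) * n) * a n ^ p) :=
        mul_le_mul_right (hardy a) _
    _ = 2 ^ (p - 2) *
          (C * (a 0 ^ p + ∑' n : ℕ, 2 ^ ((p - 2) * ((n + 1 : ℕ) : ℝ)) * a (n + 1) ^ p)) := by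
        rw [tsum_eq_zero_add' ENNReal.summable]
        simp
    _ ≤ 2 ^ (p - 2) * (C * (a 0 ^ p + 2 ^ (p + 1) * D)) := by gcongr
    _ < ⊤ := by
        have : a 0 ^ p ≠ ⊤ := rpow_ne_top_of_nonneg (by linarith) ofReal_ne_top
        finiteness

/-- If `p > 2` and `f` is an increasing homeomorphism of `[0,1]` onto itself
with `f 0 = 0` satisfying the `p`-Douglas condition, then `∫₀¹ |f x|^p / x^(p-1) dx < ∞`. -/
theorem douglas_implies_weighted_integrable
    (p : ℝ) (hp : 2 < p) (f : ℝ → ℝ)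
    (hmono : StrictMonoOn f (Icc 0 1))
    (hcont : ContinuousOn f (Icc 0 1))
    (hrange : f '' Icc 0 1 = Icc 0 1)
    (hf0 : f 0 = 0)
    (hDouglas : ∫⁻ x in Icc (0:ℝ) 1, ∫⁻ y in Icc (0:ℝ) 1,
        ENNReal.ofReal (|f x - f y| ^ p / |x - y| ^ p) < ⊤) :
    ∫⁻ x in Icc (0:ℝ) 1, ENNReal.ofReal (|f x| ^ p / x ^ (p - 1)) < ⊤ :=
  douglas_implies_weighted_integrable_general p hp f hmono hcont hf0 hDouglas
end

section
/- Let p > 2 and let (a_j)_{j≥0} be a nonincreasing sequence of nonnegative reals with a_j → 0 as j → ∞. If ∑_{j=0}^∞ 2^{(p-2)j} (a_j - a_{j+1})^p < ∞, then ∑_{k=0}^∞ 2^{(p-2)k} a_k^p < ∞. -/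
open Filter Topology

open scoped ENNReal

/-! Write `b j = a j - a (j + 1)`, so that `a k = ∑ m, b (m + k)` by telescoping. Hölder's
inequality against the weights `t⁻¹ ^ m`, for some `1 < t` with `t ^ p < w := 2 ^ (p - 2)`, gives
`a k ^ p ≤ C * ∑ m, (t ^ m * b (m + k)) ^ p`. Summing against `w ^ k` and exchanging the sums, the
`m`-th tail contributes at most `(t ^ p / w) ^ m * ∑ j, w ^ j * b j ^ p`, a geometric series in `m`.
In `ℝ≥0∞` all these sums and the exchange need no summability side conditions. -/

theorem Antitone.hasSum_sub_succ {u : ℕ → ℝ} (hu : Antitone u) {l : ℝ}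
    (hl : Tendsto u atTop (𝓝 l)) : HasSum (fun n ↦ u n - u (n + 1)) (u 0 - l) := by
  refine (hasSum_iff_tendsto_nat_of_nonneg (fun n ↦ sub_nonneg.2 (hu n.le_succ)) _).2 ?_
  simpa only [Finset.sum_range_sub'] using tendsto_const_nhds.sub hl

theorem summable_of_tsum_ofReal_ne_top {α : Type*} {f : α → ℝ} (hf : ∀ i, 0 ≤ f i)
    (h : ∑' i, ENNReal.ofReal (f i) ≠ ∞) : Summable f := by
  simpa only [ENNReal.toReal_ofReal (hf _)] using ENNReal.summable_toReal h

namespace ENNReal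

theorem inner_le_Lp_mul_Lq_tsum {ι : Type*} (f g : ι → ℝ≥0∞) {p q : ℝ}
    (hpq : p.HolderConjugate q) :
    ∑' i, f i * g i ≤ (∑' i, f i ^ p) ^ (1 / p) * (∑' i, g i ^ q) ^ (1 / q) := by
  rw [ENNReal.tsum_eq_iSup_sum]
  exact iSup_le fun s ↦ (inner_le_Lp_mul_Lq s f g hpq).trans <| mul_le_mul'
    (rpow_le_rpow (ENNReal.sum_le_tsum s) hpq.one_div_nonneg)
    (rpow_le_rpow (ENNReal.sum_le_tsum s) hpq.symm.one_div_nonneg)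

theorem exists_rpow_tsum_le_mul_tsum {p : ℝ} (hp : 1 < p) {t : ℝ≥0∞} (ht : 1 < t)
    (ht' : t ≠ ∞) :
    ∃ C, C ≠ ∞ ∧ ∀ b : ℕ → ℝ≥0∞, (∑' m, b m) ^ p ≤ C * ∑' m, (t ^ m * b m) ^ p := by
  set q := p.conjExponent
  have hpq : p.HolderConjugate q := .conjExponent hp
  have hr : t⁻¹ ^ q < 1 := rpow_lt_one (ENNReal.inv_lt_one.2 ht) hpq.symm.pos
  refine ⟨((∑' m, (t⁻¹ ^ q) ^ m) ^ (1 / q)) ^ p, ?_, fun b ↦ ?_⟩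
  · refine rpow_ne_top_of_nonneg hpq.nonneg (rpow_ne_top_of_nonneg hpq.symm.one_div_nonneg ?_)
    exact (tsum_geometric_lt_top.2 hr).ne
  have hsplit : ∀ m, b m = t⁻¹ ^ m * (t ^ m * b m) := fun m ↦ by
    rw [← mul_assoc, ← mul_pow, ENNReal.inv_mul_cancel (zero_lt_one.trans ht).ne' ht', one_pow,
      one_mul]
  have hgeom : ∀ m : ℕ, (t⁻¹ ^ m) ^ q = (t⁻¹ ^ q) ^ m := fun m ↦ by
    rw [← rpow_natCast_mul, mul_comm, rpow_mul_natCast]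
  have holder : ∑' m, b m ≤
      (∑' m, (t⁻¹ ^ q) ^ m) ^ (1 / q) * ((∑' m, (t ^ m * b m) ^ p) ^ (1 / p)) := by
    calc ∑' m, b m = ∑' m, t⁻¹ ^ m * (t ^ m * b m) := tsum_congr hsplit
      _ ≤ _ := inner_le_Lp_mul_Lq_tsum _ _ hpq.symm
      _ = _ := by simp only [hgeom]
  calc (∑' m, b m) ^ p
      ≤ ((∑' m, (t⁻¹ ^ q) ^ m) ^ (1 / q) * ((∑' m, (t ^ m * b m) ^ p) ^ (1 / p))) ^ p := by
        gcongr
    _ = _ := by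
        rw [mul_rpow_of_nonneg _ _ (by linarith), one_div p, rpow_inv_rpow (by linarith)]

theorem exists_tsum_pow_mul_rpow_tail_le {p : ℝ} (hp : 1 < p) {w : ℝ≥0∞} (hw : 1 < w)
    (hw' : w ≠ ∞) :
    ∃ C, C ≠ ∞ ∧ ∀ b : ℕ → ℝ≥0∞,
      ∑' k, w ^ k * (∑' m, b (m + k)) ^ p ≤ C * ∑' j, w ^ j * b j ^ p := by
  set t := w ^ (2 * p)⁻¹
  have ht : 1 < t := one_lt_rpow hw (by positivity)
  have ht' : t ≠ ∞ := rpow_ne_top_of_nonneg (by positivity) hw'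
  have htp : t ^ p = w ^ (2⁻¹ : ℝ) := by
    rw [← rpow_mul]
    congr 1
    field_simp
  have hr : t ^ p / w < 1 := by
    rw [ENNReal.div_lt_iff (.inl (zero_lt_one.trans hw).ne') (.inl hw'), one_mul, htp]
    simpa using rpow_lt_rpow_of_exponent_lt hw hw' (by norm_num : (2⁻¹ : ℝ) < 1)
  obtain ⟨C, hC, hC_le⟩ := exists_rpow_tsum_le_mul_tsum hp ht ht'
  refine ⟨C * ∑' m, (t ^ p / w) ^ m, mul_ne_top hC (tsum_geometric_lt_top.2 hr).ne, fun b ↦ ?_⟩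
  have hweight : ∀ m k, w ^ k * (t ^ m * b (m + k)) ^ p =
      (t ^ p / w) ^ m * (w ^ (m + k) * b (m + k) ^ p) := fun m k ↦ by
    have hcancel : w⁻¹ ^ m * w ^ m = 1 := by
      rw [← mul_pow, ENNReal.inv_mul_cancel (zero_lt_one.trans hw).ne' hw', one_pow]
    rw [mul_rpow_of_nonneg _ _ (by linarith), ← rpow_natCast_mul, mul_comm (m : ℝ),
      rpow_mul_natCast, div_eq_mul_inv, mul_pow, pow_add]
    calc _ = (t ^ p) ^ m * (w⁻¹ ^ m * w ^ m) * (w ^ k * b (m + k) ^ p) := by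
          rw [hcancel]; ring
      _ = _ := by ring
  calc ∑' k, w ^ k * (∑' m, b (m + k)) ^ p
      ≤ ∑' k, w ^ k * (C * ∑' m, (t ^ m * b (m + k)) ^ p) := by
        gcongr with k; exact hC_le _
    _ = C * ∑' m, (t ^ p / w) ^ m * ∑' k, w ^ (m + k) * b (m + k) ^ p := by
        simp only [← ENNReal.tsum_mul_left, mul_left_comm (w ^ _) C, hweight]
        rw [ENNReal.tsum_comm]
    _ ≤ C * ∑' m, (t ^ p / w) ^ m * ∑' j, w ^ j * b j ^ p :=
        mul_le_mul_right (ENNReal.tsum_le_tsum fun m ↦ mul_le_mul_right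
          (tsum_comp_le_tsum_of_injective (add_right_injective m) (fun j ↦ w ^ j * b j ^ p)) _) _
    _ = C * (∑' m, (t ^ p / w) ^ m) * ∑' j, w ^ j * b j ^ p := by
        rw [ENNReal.tsum_mul_right, mul_assoc]

end ENNReal

/-- If `p > 2`, `(a_j)` is a nonincreasing sequence of nonnegative reals
tending to `0`, and `∑ 2^((p-2)j) (a_j - a_{j+1})^p < ∞`, then `∑ 2^((p-2)k) a_k^p < ∞`. -/
theorem summable_of_summable_differences
    (p : ℝ) (hp : 2 < p) (a : ℕ → ℝ)
    (ha0 : ∀ j, 0 ≤ a j)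
    (hanti : Antitone a)
    (hlim : Tendsto a atTop (nhds 0))
    (hsum : Summable fun j : ℕ => (2:ℝ) ^ ((p - 2) * (j:ℝ)) * (a j - a (j + 1)) ^ p) :
    Summable fun k : ℕ => (2:ℝ) ^ ((p - 2) * (k:ℝ)) * a k ^ p := by
  set w := ENNReal.ofReal (2 ^ (p - 2))
  have hterm : ∀ (k : ℕ) {x : ℝ}, 0 ≤ x →
      ENNReal.ofReal (2 ^ ((p - 2) * k) * x ^ p) = w ^ k * ENNReal.ofReal x ^ p :=
    fun k x hx ↦ by
      rw [ENNReal.ofReal_mul (by positivity), Real.rpow_mul_natCast (by norm_num),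
        ENNReal.ofReal_pow (by positivity), ENNReal.ofReal_rpow_of_nonneg hx (by linarith)]
  have hdiff : ∀ j, 0 ≤ a j - a (j + 1) := fun j ↦ sub_nonneg.2 (hanti j.le_succ)
  have htail : ∀ k, ENNReal.ofReal (a k) = ∑' m, ENNReal.ofReal (a (m + k) - a (m + k + 1)) :=
    fun k ↦ by
      have h := (hanti.comp_monotone fun _ _ h ↦ Nat.add_le_add_right h k).hasSum_sub_succ
        (hlim.comp (tendsto_add_atTop_nat k))
      simp only [Function.comp_def, Nat.add_right_comm _ 1 k, zero_add, sub_zero] at h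
      rw [← ENNReal.ofReal_tsum_of_nonneg (fun m ↦ hdiff _) h.summable, h.tsum_eq]
  have hw : 1 < w := ENNReal.one_lt_ofReal.2 (Real.one_lt_rpow (by norm_num) (by linarith))
  obtain ⟨C, hC, hC_le⟩ := ENNReal.exists_tsum_pow_mul_rpow_tail_le (by linarith) hw
    ENNReal.ofReal_ne_top
  have hS := hsum.tsum_ofReal_ne_top
  simp only [hterm _ (hdiff _)] at hS
  refine summable_of_tsum_ofReal_ne_top
    (fun k ↦ mul_nonneg (by positivity) (Real.rpow_nonneg (ha0 k) p)) ?_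
  simp only [hterm _ (ha0 _), htail]
  exact ne_top_of_le_ne_top (ENNReal.mul_ne_top hC hS) (hC_le _)
end

section
/- Let α > 1, p > 1, and let (c_j)_{j≥0} be nonnegative reals with ∑_{j=0}^∞ c_j^p < ∞. Define a_k = ∑_{j=k}^∞ c_j α^{-2j}. Then ∑_{k=0}^∞ a_k^p α^{2pk} < ∞. -/
/-!
With `r = α⁻²` one has `a_k α^{2k} = ∑_j r^j c_{k+j}`. Hölder's inequality with the geometric
weights `r^j` bounds the `p`-th power of this by `(1 - r)^{1-p} ∑_j r^j c_{k+j}^p`, and summing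
over `k` and exchanging the order of summation gives at most `(1 - r)^{-p} ∑_n c_n^p`.
-/

open Real

theorem rpow_tsum_mul_le_weight_mul_Lp_tsum_of_nonneg {ι : Type*} {p : ℝ} (hp : 1 ≤ p)
    {w f : ι → ℝ} (hw : ∀ i, 0 ≤ w i) (hf : ∀ i, 0 ≤ f i) (hw_sum : Summable w)
    (hwf : Summable fun i => w i * f i ^ p) :
    (∑' i, w i * f i) ^ p ≤ (∑' i, w i) ^ (p - 1) * ∑' i, w i * f i ^ p := by
  have hW : 0 ≤ ∑' i, w i := tsum_nonneg hw
  have hwp : ∀ i, 0 ≤ w i * f i ^ p := fun i => mul_nonneg (hw i) (rpow_nonneg (hf i) p)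
  have hT : 0 ≤ ∑' i, w i * f i ^ p := tsum_nonneg hwp
  have holder : ∑' i, w i * f i ≤ (∑' i, w i) ^ (1 - p⁻¹) * (∑' i, w i * f i ^ p) ^ p⁻¹ :=
    Real.tsum_le_of_sum_le (fun i => mul_nonneg (hw i) (hf i)) fun s =>
      (inner_le_weight_mul_Lp_of_nonneg s hp w f hw hf).trans <|
        mul_le_mul
          (rpow_le_rpow (Finset.sum_nonneg fun i _ => hw i) (hw_sum.sum_le_tsum s fun i _ => hw i)
            (by linarith [inv_le_one_of_one_le₀ hp]))
          (rpow_le_rpow (Finset.sum_nonneg fun i _ => hwp i)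
            (hwf.sum_le_tsum s fun i _ => hwp i) (by positivity))
          (rpow_nonneg (Finset.sum_nonneg fun i _ => hwp i) _) (rpow_nonneg hW _)
  have hp0 : p ≠ 0 := by positivity
  calc (∑' i, w i * f i) ^ p
      ≤ ((∑' i, w i) ^ (1 - p⁻¹) * (∑' i, w i * f i ^ p) ^ p⁻¹) ^ p :=
        rpow_le_rpow (tsum_nonneg fun i => mul_nonneg (hw i) (hf i)) holder (by positivity)
    _ = (∑' i, w i) ^ (p - 1) * ∑' i, w i * f i ^ p := by
        rw [mul_rpow (by positivity) (by positivity), ← rpow_mul hW, ← rpow_mul hT,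
          inv_mul_cancel₀ hp0, rpow_one, sub_mul, one_mul, inv_mul_cancel₀ hp0]

theorem summable_tsum_mul_add {u g : ℕ → ℝ} (hu : ∀ j, 0 ≤ u j) (hg : ∀ n, 0 ≤ g n)
    (hu_sum : Summable u) (hg_sum : Summable g) :
    Summable fun k => ∑' j, u j * g (k + j) := by
  have hF : Summable fun x : ℕ × ℕ => u x.1 * g (x.2 + x.1) := by
    rw [summable_prod_of_nonneg fun x => mul_nonneg (hu _) (hg _)]
    refine ⟨fun j => (hg_sum.comp_injective (add_left_injective j)).mul_left (u j), ?_⟩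
    refine (hu_sum.mul_right (∑' n, g n)).of_nonneg_of_le
      (fun j => tsum_nonneg fun k => mul_nonneg (hu _) (hg _)) fun j => ?_
    dsimp only
    rw [tsum_mul_left]
    exact mul_le_mul_of_nonneg_left
      (tsum_comp_le_tsum_of_inj hg_sum hg (add_left_injective j)) (hu j)
  exact hF.prod_symm.prod

theorem summable_rpow_tsum_geometric_mul_add {r p : ℝ} (hr₀ : 0 ≤ r) (hr₁ : r < 1) (hp : 1 ≤ p)
    {c : ℕ → ℝ} (hc : ∀ n, 0 ≤ c n) (hsum : Summable fun n => c n ^ p) :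
    Summable fun k => (∑' j, r ^ j * c (k + j)) ^ p := by
  have hgeom := summable_geometric_of_lt_one hr₀ hr₁
  have hshift := summable_tsum_mul_add (fun j => pow_nonneg hr₀ j)
    (fun n => rpow_nonneg (hc n) p) hgeom hsum
  refine (hshift.mul_left ((∑' j, r ^ j) ^ (p - 1))).of_nonneg_of_le
    (fun k => rpow_nonneg (tsum_nonneg fun j => mul_nonneg (pow_nonneg hr₀ j) (hc _)) p)
    fun k => rpow_tsum_mul_le_weight_mul_Lp_tsum_of_nonneg hp (fun j => pow_nonneg hr₀ j)
      (fun j => hc _) hgeom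
      ((hsum.comp_injective (add_right_injective k)).of_nonneg_of_le
        (fun j => mul_nonneg (pow_nonneg hr₀ j) (rpow_nonneg (hc _) p))
        fun j => mul_le_of_le_one_left (rpow_nonneg (hc _) p) (pow_le_one₀ hr₀ hr₁.le))

/-- For `α > 1`, `p > 1` and nonnegative `(c_j)` with `∑ c_j^p < ∞`, the tail
sums `a_k = ∑_{j ≥ k} c_j α^(-2j)` satisfy `∑ a_k^p α^(2pk) < ∞`. -/
theorem summable_tail_sums
    (α p : ℝ) (hα : 1 < α) (hp : 1 < p)
    (c : ℕ → ℝ) (hc : ∀ j, 0 ≤ c j)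
    (hsum : Summable fun j : ℕ => c j ^ p)
    (a : ℕ → ℝ)
    (ha : ∀ k, a k = ∑' j : ℕ, c (k + j) * α ^ (-2 * (((k + j : ℕ)) : ℝ))) :
    Summable fun k : ℕ => a k ^ p * α ^ (2 * p * (k:ℝ)) := by
  have hα₀ : 0 < α := by linarith
  set r := α ^ (-2 : ℝ)
  have hr₀ : 0 < r := by positivity
  have hr₁ : r < 1 := rpow_lt_one_of_one_lt_of_neg hα (by norm_num)
  have hpow : ∀ n : ℕ, α ^ (-2 * (n : ℝ)) = r ^ n := fun n => by
    rw [rpow_mul hα₀.le, rpow_natCast]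
  refine (summable_rpow_tsum_geometric_mul_add hr₀.le hr₁ hp.le hc hsum).congr fun k => ?_
  have hak : a k = r ^ k * ∑' j, r ^ j * c (k + j) := by
    rw [ha, ← tsum_mul_left]
    exact tsum_congr fun j => by rw [hpow, pow_add]; ring
  have hb : 0 ≤ ∑' j, r ^ j * c (k + j) :=
    tsum_nonneg fun j => mul_nonneg (pow_nonneg hr₀.le j) (hc _)
  rw [hak, mul_rpow (pow_nonneg hr₀.le k) hb, show 2 * p * (k : ℝ) = -2 * k * -p by ring,
    rpow_mul hα₀.le, hpow, rpow_neg (pow_nonneg hr₀.le k)]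
  field_simp
end

section
/- Let p ≥ 1, and let H : [0,1] → ℝ be a bounded measurable function with H(0) = 0 such that ∫₀¹ |H(x)|^p / x^{p-1} dx < ∞. Let L₁ = {(t, t) : t ∈ [0,1]} be the hypotenuse of the unit triangle, parametrized by arclength. Then ∫₀¹ ∫_{L₁} |H(x) - H(y)|^p / |x - y|^p d|y| dx < ∞, where for y = (t,t) ∈ L₁ the value H(y) denotes t (the projection to the x-axis) and |x - y| is the Euclidean distance between the point (x,0) and (t,t). -/
/-!
The distance `d` from `(x,0)` to `(t,t)` is at least `max(x,t) / 2`, hence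
`|H x - t|^p / d^p ≲ |H x|^p / max(x,t)^p + 1`, and the inner integral is controlled by
`|H x|^p ∫₀¹ max(x,t)^{-p} dt`. For `p > 1` that integral is `≲ x^{1-p}`, which turns the
integrand into the finite weighted one `|H x|^p / x^{p-1}`. For `p = 1` it is only logarithmic,
but `max(x,t) ≥ x^{1/2} t^{1/2}` bounds it by `2 x^{-1/2}`, which is integrable against the
bounded `|H x|`.
-/

open MeasureTheory Set
open scoped ENNReal
open ENNReal (ofReal ofReal_ne_top)

theorem max_le_two_mul_sqrt_sub_sq_add_sq (x t : ℝ) :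
    max x t ≤ 2 * √((x - t) ^ 2 + t ^ 2) := by
  have hxt : |x - t| ≤ √((x - t) ^ 2 + t ^ 2) := Real.abs_le_sqrt (by nlinarith)
  have ht : |t| ≤ √((x - t) ^ 2 + t ^ 2) := Real.abs_le_sqrt (by nlinarith)
  refine max_le ?_ ?_
  · linarith [le_abs_self (x - t), le_abs_self t]
  · linarith [le_abs_self t, Real.sqrt_nonneg ((x - t) ^ 2 + t ^ 2)]

theorem Real.abs_sub_rpow_le {p : ℝ} (hp : 1 ≤ p) (a b : ℝ) :
    |a - b| ^ p ≤ 2 ^ (p - 1) * (|a| ^ p + |b| ^ p) := by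
  calc |a - b| ^ p ≤ (|a| + |b|) ^ p :=
        Real.rpow_le_rpow (abs_nonneg _) (abs_sub a b) (by linarith)
    _ ≤ 2 ^ (p - 1) * (|a| ^ p + |b| ^ p) := by
        have := NNReal.rpow_add_le_mul_rpow_add_rpow ⟨|a|, abs_nonneg a⟩ ⟨|b|, abs_nonneg b⟩ hp
        exact_mod_cast this

theorem abs_sub_rpow_div_sqrt_le {p : ℝ} (hp : 1 ≤ p) (b : ℝ) {x t : ℝ} (hx : 0 < x)
    (ht : 0 ≤ t) :
    |b - t| ^ p / √((x - t) ^ 2 + t ^ 2) ^ p ≤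
      2 ^ (p - 1) * 2 ^ p * (|b| ^ p * (max x t ^ p)⁻¹ + 1) := by
  set d := √((x - t) ^ 2 + t ^ 2)
  set m := max x t
  have hp0 : 0 ≤ p := by linarith
  have hm : 0 < m := lt_max_of_lt_left hx
  have hmd : m ≤ 2 * d := max_le_two_mul_sqrt_sub_sq_add_sq x t
  have hd : 0 < d := by linarith
  have hmp : 0 < m ^ p := Real.rpow_pos_of_pos hm p
  have hdp : 0 < d ^ p := Real.rpow_pos_of_pos hd p
  have hmdp : m ^ p ≤ 2 ^ p * d ^ p := by
    rw [← Real.mul_rpow zero_le_two hd.le]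
    exact Real.rpow_le_rpow hm.le hmd hp0
  have htm : |t| ^ p ≤ m ^ p := by
    rw [abs_of_nonneg ht]
    exact Real.rpow_le_rpow ht (le_max_right x t) hp0
  calc |b - t| ^ p / d ^ p ≤ 2 ^ (p - 1) * (|b| ^ p + |t| ^ p) / d ^ p := by
        gcongr
        exact Real.abs_sub_rpow_le hp b t
    _ ≤ 2 ^ (p - 1) * (|b| ^ p + |t| ^ p) * (2 ^ p / m ^ p) := by
        rw [div_eq_mul_inv]
        gcongr
        rw [le_div_iff₀ hmp, ← div_eq_inv_mul, div_le_iff₀ hdp]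
        linarith
    _ = 2 ^ (p - 1) * 2 ^ p * (|b| ^ p * (m ^ p)⁻¹ + |t| ^ p / m ^ p) := by ring
    _ ≤ 2 ^ (p - 1) * 2 ^ p * (|b| ^ p * (m ^ p)⁻¹ + 1) := by
        gcongr
        exact (div_le_one hmp).2 htm

theorem lintegral_ofReal_rpow_Ioc_zero_one {r : ℝ} (hr : -1 < r) :
    ∫⁻ t in Ioc 0 1, ofReal (t ^ r) = ofReal (1 / (r + 1)) := by
  have hint : IntegrableOn (fun t : ℝ => t ^ r) (Ioc 0 1) :=
    (intervalIntegrable_iff_integrableOn_Ioc_of_le zero_le_one).mp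
      (intervalIntegral.intervalIntegrable_rpow' hr)
  rw [← ofReal_integral_eq_lintegral_ofReal hint
      (ae_restrict_of_forall_mem measurableSet_Ioc fun t ht => Real.rpow_nonneg ht.1.le r),
    ← intervalIntegral.integral_of_le zero_le_one, integral_rpow (Or.inl hr),
    Real.one_rpow, Real.zero_rpow (by linarith), sub_zero]

theorem lintegral_inv_max_rpow_le {p s a : ℝ} (hs0 : 0 ≤ s) (hs1 : s < 1) (hsp : s ≤ p)
    (ha : 0 < a) :
    ∫⁻ t in Ioc 0 1, ofReal ((max a t ^ p)⁻¹) ≤ ofReal (a ^ (s - p)) * ofReal (1 / (1 - s)) := by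
  have hpointwise : ∀ t ∈ Ioc (0 : ℝ) 1,
      ofReal ((max a t ^ p)⁻¹) ≤ ofReal (a ^ (s - p)) * ofReal (t ^ (-s)) := by
    intro t ht
    have hm : 0 < max a t := lt_max_of_lt_left ha
    have hsplit : a ^ (p - s) * t ^ s ≤ max a t ^ p := by
      calc a ^ (p - s) * t ^ s ≤ max a t ^ (p - s) * max a t ^ s := by
            gcongr
            · exact Real.rpow_nonneg ht.1.le s
            · exact le_max_left a t
            · exact ht.1.le
            · exact le_max_right a t
        _ = max a t ^ p := by rw [← Real.rpow_add hm, sub_add_cancel]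
    rw [← ENNReal.ofReal_mul (Real.rpow_nonneg ha.le _)]
    apply ENNReal.ofReal_le_ofReal
    calc (max a t ^ p)⁻¹ ≤ (a ^ (p - s) * t ^ s)⁻¹ := by
          apply inv_anti₀ _ hsplit
          exact mul_pos (Real.rpow_pos_of_pos ha _) (Real.rpow_pos_of_pos ht.1 _)
      _ = a ^ (s - p) * t ^ (-s) := by
          rw [mul_inv, ← Real.rpow_neg ha.le, ← Real.rpow_neg ht.1.le, neg_sub]
  calc ∫⁻ t in Ioc 0 1, ofReal ((max a t ^ p)⁻¹)
      ≤ ∫⁻ t in Ioc 0 1, ofReal (a ^ (s - p)) * ofReal (t ^ (-s)) :=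
        lintegral_mono_ae (ae_restrict_of_forall_mem measurableSet_Ioc hpointwise)
    _ = ofReal (a ^ (s - p)) * ofReal (1 / (1 - s)) := by
        rw [lintegral_const_mul' _ _ ofReal_ne_top,
          lintegral_ofReal_rpow_Ioc_zero_one (by linarith), neg_add_eq_sub]

theorem lintegral_Ioi_inv_max_rpow {p a : ℝ} (hp : 1 < p) (ha : 0 < a) :
    ∫⁻ t in Ioi 0, ofReal ((max a t ^ p)⁻¹) = ofReal (p / (p - 1) / a ^ (p - 1)) := by
  have hnear : ∫⁻ t in Ioc 0 a, ofReal ((max a t ^ p)⁻¹) = ofReal (a ^ (1 - p)) := by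
    rw [setLIntegral_congr_fun measurableSet_Ioc fun t ht => by rw [max_eq_left ht.2],
      setLIntegral_const, Real.volume_Ioc, sub_zero, ← ENNReal.ofReal_mul (by positivity),
      ← Real.rpow_neg ha.le, ← Real.rpow_add_one ha.ne', neg_add_eq_sub]
  have hfar : ∫⁻ t in Ioi a, ofReal ((max a t ^ p)⁻¹) = ofReal (a ^ (1 - p) / (p - 1)) := by
    have hint : IntegrableOn (fun t : ℝ => t ^ (-p)) (Ioi a) :=
      integrableOn_Ioi_rpow_of_lt (by linarith) ha
    rw [setLIntegral_congr_fun measurableSet_Ioi fun t ht => by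
        rw [max_eq_right (le_of_lt ht), ← Real.rpow_neg (ha.trans ht).le],
      ← ofReal_integral_eq_lintegral_ofReal hint (ae_restrict_of_forall_mem measurableSet_Ioi
        fun t ht => Real.rpow_nonneg (ha.trans ht).le _),
      integral_Ioi_rpow_of_lt (by linarith) ha]
    congr 1
    rw [neg_add_eq_sub, neg_div, ← div_neg, neg_sub]
  rw [← Ioc_union_Ioi_eq_Ioi ha.le, lintegral_union measurableSet_Ioi Ioc_disjoint_Ioi_same,
    hnear, hfar, ← ENNReal.ofReal_add (by positivity) (by have := sub_pos.2 hp; positivity)]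
  congr 1
  have : p - 1 ≠ 0 := by linarith
  rw [show 1 - p = -(p - 1) by ring, Real.rpow_neg ha.le]
  field_simp
  ring

theorem lintegral_hypotenuse_le {p : ℝ} (hp : 1 ≤ p) (b : ℝ) {x : ℝ} (hx : 0 < x) :
    ∫⁻ t in Icc 0 1, ofReal (√2 * (|b - t| ^ p / √((x - t) ^ 2 + t ^ 2) ^ p)) ≤
      ofReal (√2 * 2 ^ (p - 1) * 2 ^ p) *
        (ofReal (|b| ^ p) * (∫⁻ t in Ioc 0 1, ofReal ((max x t ^ p)⁻¹)) + 1) := by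
  set c := √2 * 2 ^ (p - 1) * 2 ^ p
  have hpointwise : ∀ t ∈ Ioc (0 : ℝ) 1,
      ofReal (√2 * (|b - t| ^ p / √((x - t) ^ 2 + t ^ 2) ^ p)) ≤
        ofReal c * (ofReal (|b| ^ p) * ofReal ((max x t ^ p)⁻¹) + 1) := by
    intro t ht
    rw [← ENNReal.ofReal_mul (by positivity), ← ENNReal.ofReal_one,
      ← ENNReal.ofReal_add (by positivity) zero_le_one, ← ENNReal.ofReal_mul (by positivity)]
    apply ENNReal.ofReal_le_ofReal
    calc √2 * (|b - t| ^ p / √((x - t) ^ 2 + t ^ 2) ^ p)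
        ≤ √2 * (2 ^ (p - 1) * 2 ^ p * (|b| ^ p * (max x t ^ p)⁻¹ + 1)) :=
          mul_le_mul_of_nonneg_left (abs_sub_rpow_div_sqrt_le hp b hx ht.1.le) (Real.sqrt_nonneg 2)
      _ = c * (|b| ^ p * (max x t ^ p)⁻¹ + 1) := by ring
  calc ∫⁻ t in Icc 0 1, ofReal (√2 * (|b - t| ^ p / √((x - t) ^ 2 + t ^ 2) ^ p))
      = ∫⁻ t in Ioc 0 1, ofReal (√2 * (|b - t| ^ p / √((x - t) ^ 2 + t ^ 2) ^ p)) :=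
        setLIntegral_congr Ioc_ae_eq_Icc.symm
    _ ≤ ∫⁻ t in Ioc 0 1, ofReal c * (ofReal (|b| ^ p) * ofReal ((max x t ^ p)⁻¹) + 1) :=
        lintegral_mono_ae (ae_restrict_of_forall_mem measurableSet_Ioc hpointwise)
    _ = ofReal c * (ofReal (|b| ^ p) * (∫⁻ t in Ioc 0 1, ofReal ((max x t ^ p)⁻¹)) + 1) := by
        rw [lintegral_const_mul' _ _ ofReal_ne_top, lintegral_add_right _ measurable_const,
          lintegral_const_mul' _ _ ofReal_ne_top, setLIntegral_one, Real.volume_Ioc, sub_zero,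
          ENNReal.ofReal_one]

theorem setLIntegral_lt_top_of_le_mul_add_one {α : Type*} [MeasurableSpace α] {μ : Measure α}
    {s : Set α} {f g : α → ℝ≥0∞} {c : ℝ≥0∞} (hs : MeasurableSet s) (hμs : μ s ≠ ⊤)
    (hc : c ≠ ⊤) (hfg : ∀ x ∈ s, f x ≤ c * (g x + 1)) (hg : ∫⁻ x in s, g x ∂μ < ⊤) :
    ∫⁻ x in s, f x ∂μ < ⊤ := by
  calc ∫⁻ x in s, f x ∂μ ≤ ∫⁻ x in s, c * (g x + 1) ∂μ :=
        lintegral_mono_ae (ae_restrict_of_forall_mem hs hfg)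
    _ = c * (∫⁻ x in s, g x ∂μ + μ s) := by
        rw [lintegral_const_mul' _ _ hc, lintegral_add_right _ measurable_const, setLIntegral_one]
    _ < ⊤ := ENNReal.mul_lt_top hc.lt_top (ENNReal.add_lt_top.2 ⟨hg, hμs.lt_top⟩)

theorem lintegral_hypotenuse_lt_top {p : ℝ} (hp : 1 ≤ p) (H : ℝ → ℝ)
    (hH : ∫⁻ x in Ioc 0 1,
      ofReal (|H x| ^ p) * ∫⁻ t in Ioc 0 1, ofReal ((max x t ^ p)⁻¹) < ⊤) :
    ∫⁻ x in Icc 0 1, ∫⁻ t in Icc 0 1,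
      ofReal (√2 * (|H x - t| ^ p / √((x - t) ^ 2 + t ^ 2) ^ p)) < ⊤ := by
  rw [setLIntegral_congr (Ioc_ae_eq_Icc (α := ℝ) (μ := volume)).symm]
  exact setLIntegral_lt_top_of_le_mul_add_one measurableSet_Ioc (by simp) ofReal_ne_top
    (fun x hx => lintegral_hypotenuse_le hp (H x) hx.1) hH

theorem lintegral_abs_mul_lintegral_inv_max_lt_top {H : ℝ → ℝ} {M : ℝ}
    (hM : ∀ x ∈ Icc (0 : ℝ) 1, |H x| ≤ M) :
    ∫⁻ x in Ioc 0 1,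
      ofReal (|H x| ^ (1 : ℝ)) * ∫⁻ t in Ioc 0 1, ofReal ((max x t ^ (1 : ℝ))⁻¹) < ⊤ := by
  calc _ ≤ ∫⁻ x in Ioc 0 1,
          ofReal M * (ofReal (x ^ ((1 : ℝ) / 2 - 1)) * ofReal (1 / (1 - 1 / 2))) := by
        refine lintegral_mono_ae (ae_restrict_of_forall_mem measurableSet_Ioc fun x hx => ?_)
        gcongr
        · exact (Real.rpow_one _).trans_le (hM x (Ioc_subset_Icc_self hx))
        · exact lintegral_inv_max_rpow_le (by norm_num) (by norm_num) (by norm_num) hx.1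
    _ < ⊤ := by
        rw [lintegral_const_mul' _ _ ofReal_ne_top, lintegral_mul_const' _ _ ofReal_ne_top,
          lintegral_ofReal_rpow_Ioc_zero_one (by norm_num)]
        finiteness

theorem lintegral_abs_rpow_mul_lintegral_inv_max_rpow_lt_top {p : ℝ} (hp : 1 < p) {H : ℝ → ℝ}
    (hH : ∫⁻ x in Icc 0 1, ofReal (|H x| ^ p / x ^ (p - 1)) < ⊤) :
    ∫⁻ x in Ioc 0 1,
      ofReal (|H x| ^ p) * ∫⁻ t in Ioc 0 1, ofReal ((max x t ^ p)⁻¹) < ⊤ := by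
  have hpointwise : ∀ x ∈ Ioc (0 : ℝ) 1,
      ofReal (|H x| ^ p) * ∫⁻ t in Ioc 0 1, ofReal ((max x t ^ p)⁻¹) ≤
        ofReal (p / (p - 1)) * ofReal (|H x| ^ p / x ^ (p - 1)) := by
    intro x hx
    calc _ ≤ ofReal (|H x| ^ p) * ofReal (p / (p - 1) / x ^ (p - 1)) := by
          gcongr
          rw [← lintegral_Ioi_inv_max_rpow hp hx.1]
          exact lintegral_mono_set Ioc_subset_Ioi_self
      _ = _ := by
          rw [← ENNReal.ofReal_mul (by positivity),
            ← ENNReal.ofReal_mul (div_nonneg (by linarith) (by linarith))]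
          congr 1
          ring
  calc _ ≤ ∫⁻ x in Ioc 0 1, ofReal (p / (p - 1)) * ofReal (|H x| ^ p / x ^ (p - 1)) :=
        lintegral_mono_ae (ae_restrict_of_forall_mem measurableSet_Ioc hpointwise)
    _ ≤ ofReal (p / (p - 1)) * ∫⁻ x in Icc 0 1, ofReal (|H x| ^ p / x ^ (p - 1)) := by
        rw [lintegral_const_mul' _ _ ofReal_ne_top]
        gcongr
        exact Ioc_subset_Icc_self
    _ < ⊤ := ENNReal.mul_lt_top ENNReal.ofReal_lt_top hH

theorem douglas_mixed_integral_finite_general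
    (p : ℝ) (hp : 1 ≤ p) (H : ℝ → ℝ)
    (hbd : ∃ M : ℝ, ∀ x ∈ Icc (0:ℝ) 1, |H x| ≤ M)
    (hfin : ∫⁻ x in Icc (0:ℝ) 1, ENNReal.ofReal (|H x| ^ p / x ^ (p - 1)) < ⊤) :
    ∫⁻ x in Icc (0:ℝ) 1, ∫⁻ t in Icc (0:ℝ) 1,
        ENNReal.ofReal (Real.sqrt 2 * (|H x - t| ^ p / Real.sqrt ((x - t) ^ 2 + t ^ 2) ^ p))
      < ⊤ := by
  apply lintegral_hypotenuse_lt_top hp H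
  rcases hp.eq_or_lt with rfl | hp1
  · obtain ⟨M, hM⟩ := hbd
    exact lintegral_abs_mul_lintegral_inv_max_lt_top hM
  · exact lintegral_abs_rpow_mul_lintegral_inv_max_rpow_lt_top hp1 hfin

/-- If `p ≥ 1`, `H : [0,1] → ℝ` is bounded measurable with `H 0 = 0` and
`∫₀¹ |H x|^p / x^(p-1) dx < ∞`, then the mixed Douglas-type integral of
`|H(x) - H(y)|^p / |x-y|^p` over `[0,1] × L₁` is finite, where `L₁` is the hypotenuse
`{(t,t) : t ∈ [0,1]}` parametrized by arclength (arclength factor `√2`), `H` takes the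
value `t` at the point `(t,t)` of `L₁`, and `|x - y|` is the Euclidean distance from
`(x,0)` to `(t,t)`. -/
theorem douglas_mixed_integral_finite
    (p : ℝ) (hp : 1 ≤ p) (H : ℝ → ℝ)
    (hmeas : Measurable H)
    (hbd : ∃ M : ℝ, ∀ x ∈ Icc (0:ℝ) 1, |H x| ≤ M)
    (hH0 : H 0 = 0)
    (hfin : ∫⁻ x in Icc (0:ℝ) 1, ENNReal.ofReal (|H x| ^ p / x ^ (p - 1)) < ⊤) :
    ∫⁻ x in Icc (0:ℝ) 1, ∫⁻ t in Icc (0:ℝ) 1,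
        ENNReal.ofReal (Real.sqrt 2 * (|H x - t| ^ p / Real.sqrt ((x - t) ^ 2 + t ^ 2) ^ p))
      < ⊤ :=
  douglas_mixed_integral_finite_general p hp H hbd hfin
end

section
/- Let β > 1 and choose ε with 1/2 > ε and βε > 1/2. Let f(x) = (1 - log x)^{-ε} for x ∈ (0,1]. Define h = (u,v) : 𝕏 → ℝ², where 𝕏 = {(x,y) : 0 < x ≤ 1, |y| ≤ x}, by u(x,y) = f(x) and v(x,y) = f(x)^β · y/x. Then ∫_𝕏 (u_x² + v_x² + u_y² + v_y²) dx dy < ∞; in particular h has finite Dirichlet energy on the triangle 𝕏. -/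
open MeasureTheory Set


lemma cusp_aux_deriv (β ε : ℝ) (hβ : 1 < β) (hε : 0 < ε)
    (f : ℝ → ℝ) (hf : ∀ x : ℝ, f x = (1 - Real.log x) ^ (-ε))
    (h : ℝ × ℝ → ℝ × ℝ)
    (hh : ∀ z : ℝ × ℝ, h z = (f z.1, f z.1 ^ β * (z.2 / z.1)))
    (x y : ℝ) (hx : 0 < x) (hx1 : x ≤ 1) (hy : |y| ≤ x) :
    ‖fderiv ℝ h (x, y)‖ ≤
      (ε + ε * β + 2) * ((1 - Real.log x) ^ (-(min (ε + 1) (β * ε))) / x) := by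
  have hlog : Real.log x ≤ 0 := Real.log_nonpos hx.le hx1
  have hL1 : (1 : ℝ) ≤ 1 - Real.log x := by linarith
  have hL0 : (0 : ℝ) < 1 - Real.log x := by linarith
  set L : ℝ := 1 - Real.log x with hLdef
  -- derivative of f
  have hdL : HasDerivAt (fun t : ℝ => 1 - Real.log t) (-x⁻¹) x := by
    simpa using (Real.hasDerivAt_log hx.ne').const_sub 1
  have hdf : HasDerivAt f (ε * L ^ (-ε - 1) * x⁻¹) x := by
    have h2 : HasDerivAt (fun u : ℝ => u ^ (-ε)) (-ε * L ^ (-ε - 1)) L := by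
      simpa using Real.hasDerivAt_rpow_const (x := L) (p := -ε) (Or.inl hL0.ne')
    have h3 := h2.comp x hdL
    have hfe : f = fun t => (1 - Real.log t) ^ (-ε) := funext hf
    rw [hfe]
    refine HasDerivAt.congr_deriv h3 ?_
    ring
  have hfx : 0 < f x := by rw [hf]; exact Real.rpow_pos_of_pos hL0 _
  set a := ε * L ^ (-ε - 1) * x⁻¹ with hadef
  have hdg : HasDerivAt (fun t => f t ^ β) (β * f x ^ (β - 1) * a) x := by
    have h4 : HasDerivAt (fun u : ℝ => u ^ β) (β * f x ^ (β - 1)) (f x) := by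
      simpa using Real.hasDerivAt_rpow_const (x := f x) (p := β) (Or.inl hfx.ne')
    exact h4.comp x hdf
  have hdφ : HasDerivAt (fun t => f t ^ β * t⁻¹)
      (β * f x ^ (β - 1) * a * x⁻¹ + f x ^ β * (-(x ^ 2)⁻¹)) x :=
    hdg.mul (hasDerivAt_inv hx.ne')
  set b := β * f x ^ (β - 1) * a * x⁻¹ + f x ^ β * (-(x ^ 2)⁻¹) with hbdef
  have hhe : h = fun z : ℝ × ℝ => (f z.1, f z.1 ^ β * z.1⁻¹ * z.2) := by
    funext z; rw [hh]; rw [div_eq_mul_inv]; ring_nf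
  have hu : HasFDerivAt (fun z : ℝ × ℝ => f z.1)
      ((ContinuousLinearMap.smulRight (1 : ℝ →L[ℝ] ℝ) a).comp
        (ContinuousLinearMap.fst ℝ ℝ ℝ)) (x, y) :=
    hdf.hasFDerivAt.comp (x, y) hasFDerivAt_fst
  have hφ2 : HasFDerivAt (fun z : ℝ × ℝ => f z.1 ^ β * z.1⁻¹)
      ((ContinuousLinearMap.smulRight (1 : ℝ →L[ℝ] ℝ) b).comp
        (ContinuousLinearMap.fst ℝ ℝ ℝ)) (x, y) :=
    by have := hdφ.hasFDerivAt.comp (x, y) (hasFDerivAt_fst (𝕜 := ℝ) (E := ℝ) (F := ℝ) (p := (x, y))); exact this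
  have hsnd : HasFDerivAt (fun z : ℝ × ℝ => z.2) (ContinuousLinearMap.snd ℝ ℝ ℝ) (x, y) :=
    hasFDerivAt_snd
  have hv := hφ2.mul hsnd
  have hD : HasFDerivAt h
      (((ContinuousLinearMap.smulRight (1 : ℝ →L[ℝ] ℝ) a).comp
          (ContinuousLinearMap.fst ℝ ℝ ℝ)).prod
        ((f x ^ β * x⁻¹) • ContinuousLinearMap.snd ℝ ℝ ℝ +
          y • ((ContinuousLinearMap.smulRight (1 : ℝ →L[ℝ] ℝ) b).comp
            (ContinuousLinearMap.fst ℝ ℝ ℝ)))) (x, y) := by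
    rw [hhe]; exact hu.prodMk hv
  rw [hD.fderiv]
  set γ := min (ε + 1) (β * ε) with hγdef
  set Q := L ^ (-γ) with hQdef
  have hQ0 : 0 < Q := Real.rpow_pos_of_pos hL0 _
  have hP1 : L ^ (-ε - 1) ≤ Q := by
    apply Real.rpow_le_rpow_of_exponent_le hL1
    have := min_le_left (ε + 1) (β * ε); linarith
  have hfxβ : f x ^ β = L ^ (-(ε * β)) := by
    rw [hf, ← Real.rpow_mul hL0.le]; ring_nf
  have hP2 : f x ^ β ≤ Q := by
    rw [hfxβ]
    apply Real.rpow_le_rpow_of_exponent_le hL1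
    have := min_le_right (ε + 1) (β * ε); nlinarith
  have hP3 : f x ^ (β - 1) * L ^ (-ε - 1) = L ^ (-(ε * β) - 1) := by
    rw [hf, ← Real.rpow_mul hL0.le, ← Real.rpow_add hL0]; ring_nf
  have hP3le : L ^ (-(ε * β) - 1) ≤ Q := by
    apply Real.rpow_le_rpow_of_exponent_le hL1
    have h1 := min_le_right (ε + 1) (β * ε)
    have h2 : 0 < β * ε := by nlinarith
    nlinarith
  have hRHS : (ε + ε * β + 2) * (Q / x) = (ε + ε * β + 2) * Q * x⁻¹ := by
    rw [div_eq_mul_inv]; ring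
  apply ContinuousLinearMap.opNorm_le_bound
  · have hεβ : 0 < ε * β := mul_pos hε (by linarith)
    have hC : 0 < (ε + ε * β + 2) * Q := by nlinarith
    positivity
  intro w
  have hw1 : |w.1| ≤ ‖w‖ := by simpa [Real.norm_eq_abs] using norm_fst_le w
  have hw2 : |w.2| ≤ ‖w‖ := by simpa [Real.norm_eq_abs] using norm_snd_le w
  have hwnn : 0 ≤ ‖w‖ := norm_nonneg w
  have happ1 : ‖(((ContinuousLinearMap.smulRight (1 : ℝ →L[ℝ] ℝ) a).comp
          (ContinuousLinearMap.fst ℝ ℝ ℝ)).prod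
        ((f x ^ β * x⁻¹) • ContinuousLinearMap.snd ℝ ℝ ℝ +
          y • ((ContinuousLinearMap.smulRight (1 : ℝ →L[ℝ] ℝ) b).comp
            (ContinuousLinearMap.fst ℝ ℝ ℝ)))) w‖
      = max (|w.1| * |a|) |f x ^ β * x⁻¹ * w.2 + y * (w.1 * b)| := by
    simp [Prod.norm_def, Real.norm_eq_abs]
  rw [happ1, hRHS]
  have hεβ : 0 < ε * β := mul_pos hε (by linarith)
  have hxinv : 0 < x⁻¹ := inv_pos.mpr hx
  have ha_abs : |a| ≤ ε * Q * x⁻¹ := by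
    rw [hadef, abs_mul, abs_mul, abs_of_nonneg hε.le, abs_of_nonneg hxinv.le,
      abs_of_nonneg (Real.rpow_nonneg hL0.le _)]
    gcongr
  have hb_abs : |b| ≤ (ε * β + 1) * Q * (x⁻¹ * x⁻¹) := by
    have hbeq : b = ε * β * (f x ^ (β - 1) * L ^ (-ε - 1)) * (x⁻¹ * x⁻¹)
        - f x ^ β * (x ^ 2)⁻¹ := by rw [hbdef]; ring
    rw [hbeq, hP3]
    have hx2 : (x ^ 2)⁻¹ = x⁻¹ * x⁻¹ := by rw [sq]; rw [mul_inv]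
    rw [hx2]
    have h1 : |ε * β * L ^ (-(ε * β) - 1) * (x⁻¹ * x⁻¹) - f x ^ β * (x⁻¹ * x⁻¹)|
        ≤ |ε * β * L ^ (-(ε * β) - 1) * (x⁻¹ * x⁻¹)| + |f x ^ β * (x⁻¹ * x⁻¹)| :=
      abs_sub _ _
    have h2 : |ε * β * L ^ (-(ε * β) - 1) * (x⁻¹ * x⁻¹)|
        = ε * β * L ^ (-(ε * β) - 1) * (x⁻¹ * x⁻¹) := by
      apply abs_of_nonneg; positivity
    have h3 : |f x ^ β * (x⁻¹ * x⁻¹)| = f x ^ β * (x⁻¹ * x⁻¹) := by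
      apply abs_of_nonneg; positivity
    rw [h2, h3] at h1
    calc |ε * β * L ^ (-(ε * β) - 1) * (x⁻¹ * x⁻¹) - f x ^ β * (x⁻¹ * x⁻¹)|
        ≤ ε * β * L ^ (-(ε * β) - 1) * (x⁻¹ * x⁻¹) + f x ^ β * (x⁻¹ * x⁻¹) := h1
      _ ≤ ε * β * Q * (x⁻¹ * x⁻¹) + Q * (x⁻¹ * x⁻¹) := by gcongr
      _ = (ε * β + 1) * Q * (x⁻¹ * x⁻¹) := by ring
  have hc_abs : f x ^ β * x⁻¹ ≤ Q * x⁻¹ := by gcongr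
  apply max_le
  · calc |w.1| * |a| ≤ ‖w‖ * (ε * Q * x⁻¹) :=
          mul_le_mul hw1 ha_abs (abs_nonneg _) hwnn
      _ = ε * Q * x⁻¹ * ‖w‖ := by ring
      _ ≤ (ε + ε * β + 2) * Q * x⁻¹ * ‖w‖ := by
          refine mul_le_mul_of_nonneg_right (mul_le_mul_of_nonneg_right
            (mul_le_mul_of_nonneg_right ?_ hQ0.le) hxinv.le) hwnn
          linarith
  · calc |f x ^ β * x⁻¹ * w.2 + y * (w.1 * b)|
        ≤ |f x ^ β * x⁻¹ * w.2| + |y * (w.1 * b)| := abs_add_le _ _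
      _ = f x ^ β * x⁻¹ * |w.2| + |y| * (|w.1| * |b|) := by
          rw [abs_mul, abs_mul, abs_mul, abs_mul,
            abs_of_nonneg (Real.rpow_nonneg hfx.le β), abs_of_nonneg hxinv.le]
      _ ≤ f x ^ β * x⁻¹ * ‖w‖ + x * (‖w‖ * ((ε * β + 1) * Q * (x⁻¹ * x⁻¹))) := by
          refine add_le_add (mul_le_mul_of_nonneg_left hw2
            (mul_nonneg (Real.rpow_nonneg hfx.le β) hxinv.le)) ?_
          exact mul_le_mul hy (mul_le_mul hw1 hb_abs (abs_nonneg _) hwnn)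
            (mul_nonneg (abs_nonneg _) (abs_nonneg _)) hx.le
      _ = (f x ^ β * x⁻¹ + (ε * β + 1) * Q * ((x * x⁻¹) * x⁻¹)) * ‖w‖ := by ring
      _ = (f x ^ β * x⁻¹ + (ε * β + 1) * Q * x⁻¹) * ‖w‖ := by
          rw [mul_inv_cancel₀ hx.ne']; ring_nf
      _ ≤ (Q * x⁻¹ + (ε * β + 1) * Q * x⁻¹) * ‖w‖ := by gcongr
      _ = (ε * β + 2) * Q * x⁻¹ * ‖w‖ := by ring
      _ ≤ (ε + ε * β + 2) * Q * x⁻¹ * ‖w‖ := by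
          refine mul_le_mul_of_nonneg_right (mul_le_mul_of_nonneg_right
            (mul_le_mul_of_nonneg_right ?_ hQ0.le) hxinv.le) hwnn
          linarith

set_option maxHeartbeats 1000000 in
/-- Let `β > 1` and `ε` with `ε < 1/2`, `βε > 1/2`. With
`f x = (1 - log x)^(-ε)` and `h(x,y) = (f x, (f x)^β · y/x)` on the triangle
`𝕏 = {(x,y) : 0 < x ≤ 1, |y| ≤ x}`, the Dirichlet energy of `h` on `𝕏`
(the integral of the squared norm of the differential) is finite. -/
theorem cusp_map_finite_dirichlet_energy
    (β ε : ℝ) (hβ : 1 < β) (hε1 : ε < 1 / 2) (hε2 : 1 / 2 < β * ε)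
    (f : ℝ → ℝ) (hf : ∀ x : ℝ, f x = (1 - Real.log x) ^ (-ε))
    (h : ℝ × ℝ → ℝ × ℝ)
    (hh : ∀ z : ℝ × ℝ, h z = (f z.1, f z.1 ^ β * (z.2 / z.1))) :
    ∫⁻ z in {z : ℝ × ℝ | 0 < z.1 ∧ z.1 ≤ 1 ∧ |z.2| ≤ z.1},
        ENNReal.ofReal (‖fderiv ℝ h z‖ ^ 2) < ⊤ := by
  have hε : 0 < ε := by nlinarith
  set γ : ℝ := min (ε + 1) (β * ε) with hγdef
  have hγhalf : 1 / 2 < γ := lt_min (by linarith) hε2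
  set C : ℝ := ε + ε * β + 2 with hCdef
  have hC0 : 0 < C := by nlinarith
  set S : Set (ℝ × ℝ) := {z : ℝ × ℝ | 0 < z.1 ∧ z.1 ≤ 1 ∧ |z.2| ≤ z.1} with hSdef
  have hSm : MeasurableSet S := by
    apply MeasurableSet.inter
    · exact measurableSet_lt measurable_const measurable_fst
    apply MeasurableSet.inter
    · exact measurableSet_le measurable_fst measurable_const
    · exact measurableSet_le (measurable_snd.abs) measurable_fst
  set W : ℝ → ℝ := fun x => C ^ 2 * ((1 - Real.log x) ^ (-(2 * γ)) * (x ^ 2)⁻¹) with hWdef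
  have hbound : ∀ z ∈ S, ENNReal.ofReal (‖fderiv ℝ h z‖ ^ 2) ≤ ENNReal.ofReal (W z.1) := by
    rintro ⟨x, y⟩ ⟨hx, hx1, hy⟩
    apply ENNReal.ofReal_le_ofReal
    have hkey := cusp_aux_deriv β ε hβ hε f hf h hh x y hx hx1 hy
    have hL0 : (0 : ℝ) < 1 - Real.log x := by
      nlinarith [Real.log_nonpos hx.le hx1]
    calc ‖fderiv ℝ h (x, y)‖ ^ 2
        ≤ (C * ((1 - Real.log x) ^ (-γ) / x)) ^ 2 := by
          apply pow_le_pow_left₀ (norm_nonneg _) hkey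
      _ = W x := by
          have hP2 : ((1 - Real.log x) ^ (-γ)) ^ 2 = (1 - Real.log x) ^ (-(2 * γ)) := by
            rw [← Real.rpow_natCast ((1 - Real.log x) ^ (-γ)) 2,
              ← Real.rpow_mul hL0.le]
            congr 1
            push_cast
            ring
          rw [hWdef]
          rw [mul_pow, div_pow, hP2, div_eq_mul_inv]
  set W2 : ℝ → ℝ := fun x => 2 * C ^ 2 * ((1 - Real.log x) ^ (-(2 * γ)) * x⁻¹)
    with hW2def
  have hWm0 : Measurable W := by
    rw [hWdef]
    exact (((measurable_const.sub Real.measurable_log).pow measurable_const).mul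
      ((measurable_id.pow_const 2).inv)).const_mul _
  have hWm : Measurable fun z : ℝ × ℝ => ENNReal.ofReal (W z.1) :=
    (hWm0.comp measurable_fst).ennreal_ofReal
  have htonelli : ∫⁻ z in S, ENNReal.ofReal (W z.1) ∂volume
      = ∫⁻ x in Ioc (0:ℝ) 1, ENNReal.ofReal (W x) * ENNReal.ofReal (2 * x) := by
    rw [← lintegral_indicator hSm, ← lintegral_indicator measurableSet_Ioc,
      Measure.volume_eq_prod, lintegral_prod _ (hWm.indicator hSm).aemeasurable]
    apply lintegral_congr
    intro x
    by_cases hx : x ∈ Ioc (0:ℝ) 1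
    · have heq : (fun y => S.indicator (fun z : ℝ × ℝ => ENNReal.ofReal (W z.1)) (x, y))
          = (Icc (-x) x).indicator (fun _ => ENNReal.ofReal (W x)) := by
        funext y
        by_cases hy : y ∈ Icc (-x) x
        · rw [indicator_of_mem hy, indicator_of_mem]
          exact ⟨hx.1, hx.2, abs_le.mpr ⟨hy.1, hy.2⟩⟩
        · rw [indicator_of_notMem hy, indicator_of_notMem]
          intro hmem
          exact hy ⟨(abs_le.mp hmem.2.2).1, (abs_le.mp hmem.2.2).2⟩
      rw [heq, lintegral_indicator measurableSet_Icc, setLIntegral_const,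
        Real.volume_Icc, indicator_of_mem hx]
      congr 1
      rw [show x - -x = 2 * x by ring]
    · have heq : ∀ y : ℝ, S.indicator (fun z : ℝ × ℝ => ENNReal.ofReal (W z.1)) (x, y)
          = 0 := by
        intro y
        apply indicator_of_notMem
        intro hmem
        exact hx ⟨hmem.1, hmem.2.1⟩
      simp only [heq, lintegral_zero, indicator_of_notMem hx]
  have hstep2 : ∫⁻ x in Ioc (0:ℝ) 1, ENNReal.ofReal (W x) * ENNReal.ofReal (2 * x)
      = ∫⁻ x in Ioc (0:ℝ) 1, ENNReal.ofReal (W2 x) := by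
    apply setLIntegral_congr_fun measurableSet_Ioc
    intro x hx
    have hL0 : (0 : ℝ) < 1 - Real.log x := by
      nlinarith [Real.log_nonpos hx.1.le hx.2]
    have hWnn : 0 ≤ W x := by
      rw [hWdef]
      exact mul_nonneg (by positivity)
        (mul_nonneg (Real.rpow_nonneg hL0.le _) (by positivity))
    beta_reduce
    rw [← ENNReal.ofReal_mul hWnn]
    congr 1
    have hxne : x ≠ 0 := ne_of_gt hx.1
    rw [hWdef, hW2def]
    field_simp
  have himg : (fun t : ℝ => Real.exp (1 - t)) '' Ici 1 = Ioc (0:ℝ) 1 := by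
    ext u
    constructor
    · rintro ⟨t, ht, rfl⟩
      refine ⟨Real.exp_pos _, ?_⟩
      rw [show (1:ℝ) = Real.exp 0 by rw [Real.exp_zero]]
      exact Real.exp_le_exp.mpr (by simpa using ht)
    · rintro ⟨hu0, hu1⟩
      refine ⟨1 - Real.log u, ?_, ?_⟩
      · have := Real.log_nonpos hu0.le hu1
        simp only [mem_Ici]; linarith
      · show Real.exp (1 - (1 - Real.log u)) = u
        rw [show (1:ℝ) - (1 - Real.log u) = Real.log u by ring, Real.exp_log hu0]
  have hderiv : ∀ t ∈ Ici (1:ℝ), HasDerivWithinAt (fun t : ℝ => Real.exp (1 - t))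
      (-Real.exp (1 - t)) (Ici 1) t := by
    intro t _
    have h1 : HasDerivAt (fun t : ℝ => Real.exp (1 - t)) (Real.exp (1 - t) * (-1)) t :=
      (Real.hasDerivAt_exp (1 - t)).comp t (by simpa using (hasDerivAt_id t).const_sub 1)
    simpa using h1.hasDerivWithinAt
  have hinj : InjOn (fun t : ℝ => Real.exp (1 - t)) (Ici 1) := by
    intro p _ q _ hpq
    have := Real.exp_injective hpq
    linarith
  have hint : IntegrableOn W2 (Ioc (0:ℝ) 1) := by
    rw [← himg]
    rw [integrableOn_image_iff_integrableOn_abs_deriv_smul measurableSet_Ici hderiv hinj]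
    have hbase : IntegrableOn (fun t : ℝ => 2 * C ^ 2 * t ^ (-(2 * γ))) (Ici 1) := by
      rw [integrableOn_Ici_iff_integrableOn_Ioi]
      exact (integrableOn_Ioi_rpow_of_lt (by linarith) one_pos).const_mul _
    apply hbase.congr_fun _ measurableSet_Ici
    intro t ht
    simp only [smul_eq_mul, abs_neg, abs_of_pos (Real.exp_pos _), hW2def]
    rw [Real.log_exp, show (1 : ℝ) - (1 - t) = t by ring]
    rw [show Real.exp (1 - t) * (2 * C ^ 2 * (t ^ (-(2 * γ)) * (Real.exp (1 - t))⁻¹))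
        = (Real.exp (1 - t) * (Real.exp (1 - t))⁻¹) * (2 * C ^ 2 * t ^ (-(2 * γ))) by ring,
      mul_inv_cancel₀ (Real.exp_ne_zero _), one_mul]
  calc ∫⁻ z in S, ENNReal.ofReal (‖fderiv ℝ h z‖ ^ 2)
      ≤ ∫⁻ z in S, ENNReal.ofReal (W z.1) := setLIntegral_mono' hSm hbound
    _ = ∫⁻ x in Ioc (0:ℝ) 1, ENNReal.ofReal (W x) * ENNReal.ofReal (2 * x) := htonelli
    _ = ∫⁻ x in Ioc (0:ℝ) 1, ENNReal.ofReal (W2 x) := hstep2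
    _ < ⊤ := hint.setLIntegral_lt_top
end
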